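/- arXiv:2406.06061 — 2 statements merged into one kernel-verified Lean document; each statement's English description precedes it below -/
import Mathlib

section
/- Let X be a real m×n matrix, let λ₁, λ_F be nonnegative reals, and define the SLIM loss l_SLIM(W) := ‖X − X·W‖_F² + λ_F·‖W‖_F² + λ₁·(Σ_{i,j} |W_{ij}|) for real n×n matrices W. Let W be an n×n matrix with nonnegative entries whose i-th row is identically zero, let W' be an n×n matrix with nonnegative entries that agrees with W in every row except possibly row i, and assume the diagonal entry W'_{ii} = 0. With X̂ := X − X·W and, for items i, j, the single-entry loss l_{ij}(w) := λ₁·w + λ_F·w² + Σ_{u=1}^{m} (X̂_{uj} − X_{ui}·w)², the identity l_SLIM(W') = l_SLIM(W) + Σ_{j ≠ i} ( l_{ij}(W'_{ij}) − l_{ij}(0) ) holds. -/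
open Finset Matrix

/-- The SLIM loss: squared Frobenius norm of the residual `X - X * W`,
plus Frobenius (`λ_F`) and entrywise-L1 (`λ₁`) regularization of `W`. -/
noncomputable def lSLIM {m n : ℕ} (X : Matrix (Fin m) (Fin n) ℝ) (l1 lF : ℝ)
    (W : Matrix (Fin n) (Fin n) ℝ) : ℝ :=
  (∑ u, ∑ j, (X u j - (X * W) u j) ^ 2) + lF * (∑ k, ∑ j, (W k j) ^ 2)
    + l1 * (∑ k, ∑ j, |W k j|)

/-- The single-entry SLIM loss `l_{ij}(w)`, measured with respect to the
residual matrix `X̂ := X - X * W` of the current SLIM matrix `W`. -/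
noncomputable def lSingleEntry {m n : ℕ} (X : Matrix (Fin m) (Fin n) ℝ) (l1 lF : ℝ)
    (W : Matrix (Fin n) (Fin n) ℝ) (i j : Fin n) (w : ℝ) : ℝ :=
  l1 * w + lF * w ^ 2 + ∑ u, ((X - X * W) u j - X u i * w) ^ 2


/-!
Replacing the zero row `i` of `W` by the row `W' i` changes each entry of `X * W` by the rank-one
term `X u i * W' i j`, and adds `W' i j ^ 2` and `|W' i j| = W' i j` to the two regularizers.
All three changes split over the columns `j`, column `j` contributing exactly
`l_{ij}(W'_{ij}) - l_{ij}(0)`; the column `j = i` contributes nothing because `W' i i = 0`.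
-/

theorem Fintype.sum_eq_sum_add_of_eq_off {ι M : Type*} [Fintype ι] [DecidableEq ι]
    [AddCommMonoid M] {f g : ι → M} {i : ι} (hf : f i = 0) (hg : ∀ k, k ≠ i → g k = f k) :
    ∑ k, g k = ∑ k, f k + g i := by
  rw [Fintype.sum_eq_add_sum_compl i g, Fintype.sum_eq_add_sum_compl i f, hf, zero_add,
    add_comm, Finset.sum_congr rfl fun k hk => hg k (by simpa using hk)]

section RowUpdate

variable {l n o α : Type*} [Fintype n] [DecidableEq n]

theorem Matrix.mul_apply_eq_add_of_eq_off_row [NonUnitalNonAssocSemiring α]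
    {X : Matrix l n α} {W W' : Matrix n o α} {i : n} (hrow : ∀ j, W i j = 0)
    (hagree : ∀ k j, k ≠ i → W' k j = W k j) (u : l) (j : o) :
    (X * W') u j = (X * W) u j + X u i * W' i j := by
  simp only [mul_apply]
  exact Fintype.sum_eq_sum_add_of_eq_off (by simp [hrow]) fun k hk => by rw [hagree k j hk]

theorem Matrix.sub_mul_apply_eq_sub_of_eq_off_row [NonUnitalNonAssocRing α]
    {X : Matrix l n α} {W W' : Matrix n n α} {i : n} (hrow : ∀ j, W i j = 0)
    (hagree : ∀ k j, k ≠ i → W' k j = W k j) (u : l) (j : n) :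
    X u j - (X * W') u j = (X - X * W) u j - X u i * W' i j := by
  rw [mul_apply_eq_add_of_eq_off_row hrow hagree, sub_apply, sub_add_eq_sub_sub]

end RowUpdate

theorem lSingleEntry_sub_lSingleEntry_zero {m n : ℕ} (X : Matrix (Fin m) (Fin n) ℝ)
    (l1 lF : ℝ) (W : Matrix (Fin n) (Fin n) ℝ) (i j : Fin n) (w : ℝ) :
    lSingleEntry X l1 lF W i j w - lSingleEntry X l1 lF W i j 0 =
      l1 * w + lF * w ^ 2 +
        (∑ u, ((X - X * W) u j - X u i * w) ^ 2 - ∑ u, ((X - X * W) u j) ^ 2) := by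
  simp only [lSingleEntry, mul_zero, sub_zero]
  ring

theorem slim_loss_row_decomposition_general {m n : ℕ} (X : Matrix (Fin m) (Fin n) ℝ)
    (l1 lF : ℝ) (i : Fin n)
    (W W' : Matrix (Fin n) (Fin n) ℝ)
    (hWrow : ∀ j, W i j = 0)
    (hW' : ∀ k j, 0 ≤ W' k j) (hagree : ∀ k j, k ≠ i → W' k j = W k j)
    (hdiag : W' i i = 0) :
    lSLIM X l1 lF W' =
      lSLIM X l1 lF W +
        ∑ j ∈ Finset.univ.erase i,
          (lSingleEntry X l1 lF W i j (W' i j) - lSingleEntry X l1 lF W i j 0) := by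
  have hresidual : ∑ u, ∑ j, (X u j - (X * W') u j) ^ 2 =
      ∑ u, ∑ j, (X u j - (X * W) u j) ^ 2 +
        ∑ j, (∑ u, ((X - X * W) u j - X u i * W' i j) ^ 2 - ∑ u, ((X - X * W) u j) ^ 2) := by
    simp only [sub_mul_apply_eq_sub_of_eq_off_row hWrow hagree, Matrix.sub_apply]
    rw [Finset.sum_comm, Finset.sum_comm (f := fun u j => (X u j - (X * W) u j) ^ 2),
      Finset.sum_sub_distrib, add_sub_cancel]
  have hfrobenius : ∑ k, ∑ j, W' k j ^ 2 = ∑ k, ∑ j, W k j ^ 2 + ∑ j, W' i j ^ 2 :=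
    Fintype.sum_eq_sum_add_of_eq_off (by simp [hWrow]) fun k hk => by simp only [hagree k _ hk]
  have hl1 : ∑ k, ∑ j, |W' k j| = ∑ k, ∑ j, |W k j| + ∑ j, W' i j := by
    rw [← Finset.sum_congr rfl fun j _ => abs_of_nonneg (hW' i j)]
    exact Fintype.sum_eq_sum_add_of_eq_off (by simp [hWrow]) fun k hk => by
      simp only [hagree k _ hk]
  rw [Finset.sum_erase _ (by rw [hdiag, sub_self])]
  simp only [lSLIM, lSingleEntry_sub_lSingleEntry_zero, hresidual, hfrobenius, hl1,
    Finset.sum_add_distrib, Finset.mul_sum, mul_add]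
  ring

/-- Lemma 1 of the paper: if `W` is nonnegative with zero `i`-th row and `W'`
is nonnegative, agrees with `W` outside row `i`, and has `W' i i = 0`, then the
SLIM loss of `W'` decomposes as the SLIM loss of `W` plus the sum over `j ≠ i`
of the single-entry improvements `l_{ij}(W'_{ij}) - l_{ij}(0)`. -/
theorem slim_loss_row_decomposition {m n : ℕ} (X : Matrix (Fin m) (Fin n) ℝ)
    (l1 lF : ℝ) (hl1 : 0 ≤ l1) (hlF : 0 ≤ lF) (i : Fin n)
    (W W' : Matrix (Fin n) (Fin n) ℝ)
    (hW : ∀ k j, 0 ≤ W k j) (hWrow : ∀ j, W i j = 0)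
    (hW' : ∀ k j, 0 ≤ W' k j) (hagree : ∀ k j, k ≠ i → W' k j = W k j)
    (hdiag : W' i i = 0) :
    lSLIM X l1 lF W' =
      lSLIM X l1 lF W +
        ∑ j ∈ Finset.univ.erase i,
          (lSingleEntry X l1 lF W i j (W' i j) - lSingleEntry X l1 lF W i j 0) :=
  slim_loss_row_decomposition_general X l1 lF i W W' hWrow hW' hagree hdiag
end

section
/- Let X be a real m×n matrix, λ₁ ≥ 0, λ_F > 0, and let W be an n×n nonnegative matrix whose i-th row is zero. Set X̂ := X − X·W and l_{ij}(w) := λ₁·w + λ_F·w² + Σ_u (X̂_{uj} − X_{ui}·w)². Define the row v ∈ ℝ^n by v_j := max{ (−λ₁/2 + Σ_u X̂_{uj}·X_{ui}) / (λ_F + Σ_u X_{ui}²), 0 } for j ≠ i and v_i := 0, and let W* := W + e_i·vᵀ. Then for every nonnegative matrix W' that agrees with W outside row i and has W'_{ii} = 0, l_SLIM(W*) ≤ l_SLIM(W'); that is, filling row i componentwise with the clipped single-entry minimizers minimizes the SLIM loss over all admissible choices of row i. -/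
open Finset Matrix

/-- The greedy row for item `i`: entry `j ≠ i` is the clipped single-entry
minimizer `max{(-λ₁/2 + Σ_u X̂_{uj} X_{ui}) / (λ_F + Σ_u X_{ui}²), 0}` computed
from the residual `X̂ := X - X * W`, and entry `i` is zero. -/
noncomputable def greedyRow {m n : ℕ} (X : Matrix (Fin m) (Fin n) ℝ)
    (l1 lF : ℝ) (W : Matrix (Fin n) (Fin n) ℝ) (i : Fin n) : Fin n → ℝ :=
  fun j =>
    if j = i then 0
    else
      max ((-l1 / 2 + ∑ u, (X - X * W) u j * X u i) /
            (lF + ∑ u, (X u i) ^ 2)) 0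

/-!
Because row `i` of `W` is zero, `X * W.updateRow i w = X * W + X_{·i} wᵀ`, so the loss of
`W.updateRow i w` is the loss of `W` plus `∑ j, (l_{ij}(w j) - l_{ij}(0))`, and the entries of row
`i` can be optimized independently. Each `l_{ij}` is, up to a constant, `a w² - 2 c w` with
`a = λ_F + ∑ u, X_{ui}² > 0`, whose minimum over `w ≥ 0` is at `max (c / a) 0`.
-/

namespace Matrix

variable {l m n R : Type*} [Fintype m] [DecidableEq m]

lemma sum_compl_updateRow {β : Type*} [AddCommMonoid β] (M : Matrix m n R) (i : m) (b : n → R)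
    (g : m → (n → R) → β) : ∑ k ∈ {i}ᶜ, g k (M.updateRow i b k) = ∑ k ∈ {i}ᶜ, g k (M k) :=
  Finset.sum_congr rfl fun k hk => by rw [updateRow_ne (by simpa using hk)]

lemma mul_updateRow_apply [CommRing R] (A : Matrix l m R) (B : Matrix m n R) (i : m)
    (b : n → R) (u : l) (j : n) :
    (A * B.updateRow i b) u j = (A * B) u j + A u i * (b j - B i j) := by
  simp only [mul_apply]
  rw [Fintype.sum_eq_add_sum_compl i, Fintype.sum_eq_add_sum_compl i (fun k => A u k * B k j),
    updateRow_self, sum_compl_updateRow _ _ _ fun k r => A u k * r j]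
  ring

lemma sum_sum_updateRow [Fintype n] {α : Type*} [AddCommGroup α] (f : R → α)
    (M : Matrix m n R) (i : m) (b : n → R) :
    ∑ k, ∑ j, f (M.updateRow i b k j) =
      ∑ k, ∑ j, f (M k j) + ∑ j, (f (b j) - f (M i j)) := by
  rw [Fintype.sum_eq_add_sum_compl i, Fintype.sum_eq_add_sum_compl i (fun k => ∑ j, f (M k j)),
    updateRow_self, Finset.sum_sub_distrib, sum_compl_updateRow _ _ _ fun _ r => ∑ j, f (r j)]
  abel

end Matrix

lemma mul_max_div_sq_sub_le {a c : ℝ} (ha : 0 < a) {w : ℝ} (hw : 0 ≤ w) :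
    a * max (c / a) 0 ^ 2 - 2 * c * max (c / a) 0 ≤ a * w ^ 2 - 2 * c * w := by
  rcases le_or_gt c 0 with hc | hc
  · rw [max_eq_right (div_nonpos_of_nonpos_of_nonneg hc ha.le)]
    nlinarith
  · rw [max_eq_left (div_pos hc ha).le]
    have hgap : a * w ^ 2 - 2 * c * w - (a * (c / a) ^ 2 - 2 * c * (c / a)) =
        (a * w - c) ^ 2 / a := by
      field_simp
      ring
    linarith [show 0 ≤ (a * w - c) ^ 2 / a by positivity]

section SLIM

variable {m n : ℕ} (X : Matrix (Fin m) (Fin n) ℝ) (l1 lF : ℝ) (W : Matrix (Fin n) (Fin n) ℝ)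
  (i : Fin n)

/-- The paper's `l_{ij}(w)`. -/
noncomputable def entryLoss (j : Fin n) (w : ℝ) : ℝ :=
  l1 * w + lF * w ^ 2 + ∑ u, ((X - X * W) u j - X u i * w) ^ 2

lemma lSLIM_updateRow_of_row_eq_zero {w : Fin n → ℝ} (hWrow : ∀ j, W i j = 0) (hw : ∀ j, 0 ≤ w j) :
    lSLIM X l1 lF (W.updateRow i w) =
      lSLIM X l1 lF W + ∑ j, (entryLoss X l1 lF W i j (w j) - entryLoss X l1 lF W i j 0) := by
  have hres : ∀ u j, X u j - (X * W.updateRow i w) u j = (X - X * W) u j - X u i * w j := by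
    intro u j
    rw [mul_updateRow_apply, hWrow, sub_zero, Matrix.sub_apply]
    ring
  have hfit : ∑ u, ∑ j, (X u j - (X * W.updateRow i w) u j) ^ 2 =
      ∑ u, ∑ j, (X u j - (X * W) u j) ^ 2 +
        ∑ j, (∑ u, ((X - X * W) u j - X u i * w j) ^ 2 - ∑ u, (X - X * W) u j ^ 2) := by
    simp only [hres, ← Finset.sum_sub_distrib]
    rw [Finset.sum_comm (γ := Fin n)]
    simp only [← Finset.sum_add_distrib, Matrix.sub_apply]
    exact Finset.sum_congr rfl fun u _ => Finset.sum_congr rfl fun j _ => by ring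
  rw [lSLIM, lSLIM, hfit, sum_sum_updateRow (fun x : ℝ => x ^ 2),
    sum_sum_updateRow (fun x : ℝ => |x|)]
  simp only [entryLoss, hWrow, abs_of_nonneg (hw _), abs_zero, mul_zero, sub_zero, add_zero,
    zero_pow two_ne_zero, zero_add, Finset.sum_add_distrib, Finset.sum_sub_distrib,
    ← Finset.mul_sum]
  ring

lemma entryLoss_eq (j : Fin n) (w : ℝ) :
    entryLoss X l1 lF W i j w = ∑ u, (X - X * W) u j ^ 2 +
      ((lF + ∑ u, X u i ^ 2) * w ^ 2 - 2 * (-l1 / 2 + ∑ u, (X - X * W) u j * X u i) * w) := by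
  have hsq : ∀ u, ((X - X * W) u j - X u i * w) ^ 2 =
      (X - X * W) u j ^ 2 - 2 * ((X - X * W) u j * X u i) * w + X u i ^ 2 * w ^ 2 := fun u => by
    ring
  simp only [entryLoss, hsq, Finset.sum_add_distrib, Finset.sum_sub_distrib, ← Finset.sum_mul,
    ← Finset.mul_sum]
  ring

lemma greedyRow_nonneg (j : Fin n) : 0 ≤ greedyRow X l1 lF W i j := by
  unfold greedyRow
  split_ifs
  exacts [le_rfl, le_max_right _ _]

lemma entryLoss_greedyRow_le (hlF : 0 < lF) {j : Fin n} (hj : j ≠ i) {w : ℝ} (hw : 0 ≤ w) :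
    entryLoss X l1 lF W i j (greedyRow X l1 lF W i j) ≤ entryLoss X l1 lF W i j w := by
  have ha : 0 < lF + ∑ u, X u i ^ 2 := by positivity
  rw [entryLoss_eq, entryLoss_eq, greedyRow, if_neg hj]
  exact (add_le_add_iff_left _).2 (mul_max_div_sq_sub_le ha hw)

end SLIM

theorem greedyRow_minimizes_general {m n : ℕ} (X : Matrix (Fin m) (Fin n) ℝ)
    (l1 lF : ℝ) (hlF : 0 < lF) (i : Fin n)
    (W : Matrix (Fin n) (Fin n) ℝ)
    (hWrow : ∀ j, W i j = 0) :
    ∀ W' : Matrix (Fin n) (Fin n) ℝ,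
      (∀ k j, 0 ≤ W' k j) → (∀ k j, k ≠ i → W' k j = W k j) → W' i i = 0 →
      lSLIM X l1 lF (W.updateRow i (greedyRow X l1 lF W i)) ≤
        lSLIM X l1 lF W' := by
  intro W' hW' hW'_eq hW'_ii
  have hW'_row : W' = W.updateRow i (W' i) := by
    ext k j
    by_cases hk : k = i
    · simp [hk]
    · rw [updateRow_ne hk, hW'_eq k j hk]
  rw [hW'_row, lSLIM_updateRow_of_row_eq_zero X l1 lF W i hWrow (greedyRow_nonneg X l1 lF W i),
    lSLIM_updateRow_of_row_eq_zero X l1 lF W i hWrow (hW' i)]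
  gcongr with j
  by_cases hj : j = i
  · simp [hj, hW'_ii, greedyRow]
  · exact entryLoss_greedyRow_le X l1 lF W i hlF hj (hW' i j)

/-- Filling row `i` with the clipped single-entry minimizers minimizes the
SLIM loss over all admissible choices of row `i`: among all nonnegative `W'`
that agree with `W` outside row `i` and have `W'_{ii} = 0`, the matrix
`W* = W.updateRow i (greedyRow …)` achieves the least SLIM loss. -/
theorem greedyRow_minimizes {m n : ℕ} (X : Matrix (Fin m) (Fin n) ℝ)
    (l1 lF : ℝ) (hl1 : 0 ≤ l1) (hlF : 0 < lF) (i : Fin n)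
    (W : Matrix (Fin n) (Fin n) ℝ)
    (hW : ∀ k j, 0 ≤ W k j) (hWrow : ∀ j, W i j = 0) :
    ∀ W' : Matrix (Fin n) (Fin n) ℝ,
      (∀ k j, 0 ≤ W' k j) → (∀ k j, k ≠ i → W' k j = W k j) → W' i i = 0 →
      lSLIM X l1 lF (W.updateRow i (greedyRow X l1 lF W i)) ≤
        lSLIM X l1 lF W' :=
  greedyRow_minimizes_general X l1 lF hlF i W hWrow
end
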